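/- For every positive integer a, the lattice graph 4D-FCC(a), generated by the 4×4 matrix with rows (2a,a,a,a),(0,a,0,0),(0,0,a,0),(0,0,0,a), is linearly symmetric, and its projection over e₄ is isomorphic to the face-centered cubic lattice graph FCC(a). -/

import Mathlib

open Matrix

/-- The subgroup (submodule) `Mℤⁿ` generated by the columns of `M`. -/
def colSpan {ι : Type*} [Fintype ι] [DecidableEq ι] (M : Matrix ι ι ℤ) :
    Submodule ℤ (ι → ℤ) :=
  LinearMap.range M.mulVecLin

/-- The vertex set `ℤⁿ/Mℤⁿ` of the lattice graph. -/
abbrev LatticeVertex {ι : Type*} [Fintype ι] [DecidableEq ι] (M : Matrix ι ι ℤ) :=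
  (ι → ℤ) ⧸ colSpan M

/-- The `i`-th standard basis vector of `ℤⁿ`. -/
def stdBasis {ι : Type*} [DecidableEq ι] (i : ι) : ι → ℤ := Pi.single i 1

/-- The lattice graph `𝒢(M)`. -/
def latticeGraph {ι : Type*} [Fintype ι] [DecidableEq ι] (M : Matrix ι ι ℤ) :
    SimpleGraph (LatticeVertex M) where
  Adj v w := v ≠ w ∧ ∃ i : ι,
      v - w = Submodule.Quotient.mk (stdBasis i) ∨
      w - v = Submodule.Quotient.mk (stdBasis i)
  symm := ⟨by rintro v w ⟨hne, i, h⟩; exact ⟨hne.symm, i, h.symm⟩⟩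
  loopless := ⟨fun v h => h.1 rfl⟩

/-- The subgraph of `𝒢(M)` spanned by the directions in `S`. -/
def spannedSubgraph {ι : Type*} [Fintype ι] [DecidableEq ι] (M : Matrix ι ι ℤ) (S : Set ι) :
    SimpleGraph (AddSubgroup.closure
      ((fun i => (Submodule.Quotient.mk (stdBasis i) : LatticeVertex M)) '' S)) where
  Adj v w := v ≠ w ∧ ∃ i ∈ S,
      (v : LatticeVertex M) - (w : LatticeVertex M) = Submodule.Quotient.mk (stdBasis i) ∨
      (w : LatticeVertex M) - (v : LatticeVertex M) = Submodule.Quotient.mk (stdBasis i)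
  symm := ⟨by rintro v w ⟨hne, i, hiS, h⟩; exact ⟨hne.symm, i, hiS, h.symm⟩⟩
  loopless := ⟨fun v h => h.1 rfl⟩

/-- The projection of `𝒢(M)` over `e_j`: the subgraph spanned by all other directions. -/
def projGraph {ι : Type*} [Fintype ι] [DecidableEq ι] (M : Matrix ι ι ℤ) (j : ι) :=
  spannedSubgraph M {i | i ≠ j}

/-- The torus graph `T(a₁,…,aₙ)`. -/
def torusGraph {n : ℕ} (a : Fin n → ℕ) : SimpleGraph (∀ i, ZMod (a i)) where
  Adj x y := x ≠ y ∧ ∃ i, (∀ j, j ≠ i → x j = y j) ∧ (x i = y i + 1 ∨ y i = x i + 1)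
  symm := ⟨by
    rintro x y ⟨hne, i, hj, h⟩
    exact ⟨hne.symm, i, fun j hji => (hj j hji).symm, h.symm⟩⟩
  loopless := ⟨fun x h => h.1 rfl⟩

/-- A signed permutation matrix: exactly one nonzero entry, equal to `±1`,
in each row and each column. -/
def IsSignedPerm {n : ℕ} (P : Matrix (Fin n) (Fin n) ℤ) : Prop :=
  (∀ i j, P i j = 0 ∨ P i j = 1 ∨ P i j = -1) ∧
  (∀ i, ∃! j, P i j ≠ 0) ∧ (∀ j, ∃! i, P i j ≠ 0)

/-- `𝒢(M)` is linearly symmetric: for every `i` there is a signed permutation matrix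
inducing an automorphism of `𝒢(M)` sending `e₁` to `±e_i`. -/
def IsLinearlySymmetric {n : ℕ} (M : Matrix (Fin n) (Fin n) ℤ) : Prop :=
  ∀ i : Fin n, ∃ P : Matrix (Fin n) (Fin n) ℤ, IsSignedPerm P ∧
    (∃ Q : Matrix (Fin n) (Fin n) ℤ, P * M = M * Q) ∧
    (P.mulVec (stdBasis (⟨0, i.pos⟩ : Fin n)) = stdBasis i ∨
      P.mulVec (stdBasis (⟨0, i.pos⟩ : Fin n)) = -stdBasis i)

/-!
The columns `2e₁, e₁ + e₂, e₁ + e₃, e₁ + e₄` of the matrix of `4D-FCC(a)` divided by `a` generate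
the checkerboard lattice `D₄ = {x ∈ ℤ⁴ | ∑ xᵢ even}`, which every coordinate permutation
preserves; so the transposition of `e₁` and `eᵢ` induces an automorphism, which gives linear
symmetry. For the projection, extension by zero `ℤ³ → ℤ⁴` maps `e_k` to `e_k` and pulls the
lattice of `4D-FCC(a)` back to exactly the lattice of `FCC(a)`; such a map induces an
isomorphism of `𝒢(FCC(a))` onto the subgraph of `𝒢(4D-FCC(a))` spanned by `e₁, e₂, e₃`.
-/

open Function

theorem isSignedPerm_permMatrix {n : ℕ} (σ : Equiv.Perm (Fin n)) :
    IsSignedPerm (σ.permMatrix ℤ) := by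
  have entry : ∀ i j, σ.permMatrix ℤ i j = if σ i = j then 1 else 0 := fun i j => by
    simp [Equiv.Perm.permMatrix, PEquiv.toMatrix_apply]
  refine ⟨fun i j => ?_, fun i => ⟨σ i, by simp, fun j hj => ?_⟩,
    fun j => ⟨σ.symm j, by simp, fun i hi => ?_⟩⟩
  · rw [entry]
    split_ifs <;> simp
  · simp only [entry, ite_ne_right_iff] at hj
    exact hj.1.symm
  · simp only [entry, ite_ne_right_iff] at hi
    exact σ.eq_symm_apply.2 hi.1

theorem isLinearlySymmetric_of_forall_swap {n : ℕ} (M : Matrix (Fin n) (Fin n) ℤ)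
    (h : ∀ i : Fin n, ∃ Q, (Equiv.swap ⟨0, i.pos⟩ i).permMatrix ℤ * M = M * Q) :
    IsLinearlySymmetric M := by
  intro i
  refine ⟨_, isSignedPerm_permMatrix _, h i, Or.inl ?_⟩
  ext j
  simp [_root_.stdBasis, Pi.single_apply, Equiv.swap_apply_eq_iff]

theorem extendByZero_stdBasis {κ ι : Type*} [DecidableEq κ] [DecidableEq ι] {f : κ → ι}
    (hf : Injective f) (k : κ) :
    ExtendByZero.linearMap ℤ f (_root_.stdBasis k) = _root_.stdBasis (f k) := by
  ext i
  simp only [ExtendByZero.linearMap_apply, _root_.stdBasis]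
  by_cases hi : ∃ k', f k' = i
  · obtain ⟨k', rfl⟩ := hi
    simp [hf.extend_apply, Pi.single_apply, hf.eq_iff]
  · rw [extend_apply' _ _ _ hi, Pi.single_eq_of_ne]
    · rfl
    · rintro rfl
      exact hi ⟨k, rfl⟩

theorem range_extendByZero {κ ι : Type*} [Fintype κ] [DecidableEq κ] [DecidableEq ι]
    {f : κ → ι} (hf : Injective f) :
    LinearMap.range (ExtendByZero.linearMap ℤ f) =
      Submodule.span ℤ (Set.range fun k => _root_.stdBasis (f k)) := by
  rw [LinearMap.range_eq_map, ← (Pi.basisFun ℤ κ).span_eq, Submodule.map_span, ← Set.range_comp]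
  congr 2
  funext k
  rw [Function.comp_apply, Pi.basisFun_apply]
  exact extendByZero_stdBasis hf k

theorem extendByZero_castSucc {n : ℕ} (x : Fin n → ℤ) :
    ExtendByZero.linearMap ℤ Fin.castSucc x = Fin.snoc x 0 := by
  ext j
  induction j using Fin.lastCases with
  | last =>
    rw [ExtendByZero.linearMap_apply, extend_apply', Fin.snoc_last]
    · rfl
    · rintro ⟨k, hk⟩
      exact Fin.castSucc_ne_last k hk
  | cast k => simp [(Fin.castSucc_injective n).extend_apply]

section ExtendByZero

variable {κ ι : Type*} [Fintype κ] [DecidableEq κ] [Fintype ι] [DecidableEq ι]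
  {N : Matrix κ κ ℤ} {M : Matrix ι ι ℤ} {f : κ → ι}

noncomputable def extendByZeroQ
    (hcol : colSpan N = (colSpan M).comap (ExtendByZero.linearMap ℤ f)) :
    LatticeVertex N →ₗ[ℤ] LatticeVertex M :=
  (colSpan N).mapQ (colSpan M) (ExtendByZero.linearMap ℤ f) hcol.le

variable (hcol : colSpan N = (colSpan M).comap (ExtendByZero.linearMap ℤ f))

theorem extendByZeroQ_mk (x : κ → ℤ) :
    extendByZeroQ hcol (Submodule.Quotient.mk x) =
      Submodule.Quotient.mk (ExtendByZero.linearMap ℤ f x) := rfl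

theorem extendByZeroQ_injective : Injective (extendByZeroQ hcol) := by
  rw [← LinearMap.ker_eq_bot, extendByZeroQ, Submodule.ker_mapQ, ← hcol, Submodule.mkQ_map_self]

theorem extendByZeroQ_eq_mk_stdBasis_iff (hf : Injective f) (d : LatticeVertex N) (k : κ) :
    extendByZeroQ hcol d = Submodule.Quotient.mk (_root_.stdBasis (f k)) ↔
      d = Submodule.Quotient.mk (_root_.stdBasis k) := by
  rw [← extendByZero_stdBasis hf, ← extendByZeroQ_mk hcol, (extendByZeroQ_injective hcol).eq_iff]

theorem mem_range_extendByZeroQ_iff (hf : Injective f) (v : LatticeVertex M) :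
    v ∈ LinearMap.range (extendByZeroQ hcol) ↔ v ∈ AddSubgroup.closure
      ((fun i => (Submodule.Quotient.mk (_root_.stdBasis i) : LatticeVertex M)) '' Set.range f) := by
  rw [extendByZeroQ, Submodule.range_mapQ, range_extendByZero hf, Submodule.map_span,
    ← Set.range_comp, ← Set.range_comp, ← Submodule.span_int_eq_addSubgroupClosure]
  rfl

noncomputable def latticeGraphIsoSpannedSubgraph (hf : Injective f) :
    latticeGraph N ≃g spannedSubgraph M (Set.range f) where
  toEquiv := (LinearEquiv.ofInjective _ (extendByZeroQ_injective hcol)).toEquiv.trans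
    (Equiv.subtypeEquivRight (mem_range_extendByZeroQ_iff hcol hf))
  map_rel_iff' := by
    simp [spannedSubgraph, latticeGraph, ← map_sub, extendByZeroQ_eq_mk_stdBasis_iff hcol hf]

end ExtendByZero

def fourDFCC (a : ℕ) : Matrix (Fin 4) (Fin 4) ℤ :=
  !![(2 * a : ℤ), a, a, a; 0, a, 0, 0; 0, 0, a, 0; 0, 0, 0, a]

def fcc (a : ℕ) : Matrix (Fin 3) (Fin 3) ℤ := !![(a : ℤ), a, 0; a, 0, a; 0, a, a]

def checkerboardBasis : Matrix (Fin 4) (Fin 4) ℤ :=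
  !![2, 1, 1, 1; 0, 1, 0, 0; 0, 0, 1, 0; 0, 0, 0, 1]

theorem fourDFCC_eq_smul (a : ℕ) : fourDFCC a = (a : ℤ) • checkerboardBasis := by
  ext i j
  fin_cases i <;> fin_cases j <;> simp [fourDFCC, checkerboardBasis, mul_comm]

theorem exists_swap_mul_checkerboardBasis (i : Fin 4) :
    ∃ Q, (Equiv.swap 0 i).permMatrix ℤ * checkerboardBasis = checkerboardBasis * Q := by
  -- each `Q` is `B⁻¹ P B` for `B = checkerboardBasis`
  fin_cases i
  · exact ⟨1, by decide⟩
  · exact ⟨!![-1, 0, -1, -1; 2, 1, 1, 1; 0, 0, 1, 0; 0, 0, 0, 1], by decide⟩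
  · exact ⟨!![-1, -1, 0, -1; 0, 1, 0, 0; 2, 1, 1, 1; 0, 0, 0, 1], by decide⟩
  · exact ⟨!![-1, -1, -1, 0; 0, 1, 0, 0; 0, 0, 1, 0; 2, 1, 1, 1], by decide⟩

theorem isLinearlySymmetric_fourDFCC (a : ℕ) : IsLinearlySymmetric (fourDFCC a) := by
  refine isLinearlySymmetric_of_forall_swap _ fun i => ?_
  obtain ⟨Q, hQ⟩ := exists_swap_mul_checkerboardBasis i
  exact ⟨Q, by rw [fourDFCC_eq_smul, Matrix.mul_smul, Matrix.smul_mul]; exact congrArg _ hQ⟩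

theorem fcc_mulVec (a : ℕ) (u v w : ℤ) :
    fcc a *ᵥ ![u, v, w] = ![a * (u + v), a * (u + w), a * (v + w)] := by
  ext j
  fin_cases j <;> simp [fcc, mulVec, dotProduct, Fin.sum_univ_three, mul_add]

theorem fourDFCC_mulVec (a : ℕ) (u v w t : ℤ) :
    fourDFCC a *ᵥ ![u, v, w, t] = ![a * (2 * u + v + w + t), a * v, a * w, a * t] := by
  ext j
  fin_cases j <;> simp [fourDFCC, mulVec, dotProduct, Fin.sum_univ_four, mul_add,
    mul_comm 2 (a : ℤ), mul_assoc, add_assoc]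

theorem colSpan_fcc_eq_comap (a : ℕ) :
    colSpan (fcc a) = (colSpan (fourDFCC a)).comap (ExtendByZero.linearMap ℤ Fin.castSucc) := by
  ext x
  obtain ⟨x₀, x₁, x₂, rfl⟩ : ∃ x₀ x₁ x₂, x = ![x₀, x₁, x₂] :=
    ⟨x 0, x 1, x 2, (FinVec.etaExpand_eq x).symm⟩
  have hsnoc : (Fin.snoc ![x₀, x₁, x₂] 0 : Fin 4 → ℤ) = ![x₀, x₁, x₂, 0] := by
    ext j; fin_cases j <;> rfl
  simp only [Submodule.mem_comap, colSpan, LinearMap.mem_range, mulVecLin_apply,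
    extendByZero_castSucc, hsnoc]
  constructor
  · rintro ⟨y, hy⟩
    obtain ⟨u, v, w, rfl⟩ : ∃ u v w, y = ![u, v, w] :=
      ⟨y 0, y 1, y 2, (FinVec.etaExpand_eq y).symm⟩
    rw [fcc_mulVec] at hy
    simp only [vecCons_inj, and_true] at hy
    obtain ⟨rfl, rfl, rfl⟩ := hy
    refine ⟨![-w, u + w, v + w, 0], ?_⟩
    rw [fourDFCC_mulVec]
    ring_nf
  · rintro ⟨y, hy⟩
    obtain ⟨u, v, w, t, rfl⟩ : ∃ u v w t, y = ![u, v, w, t] :=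
      ⟨y 0, y 1, y 2, y 3, (FinVec.etaExpand_eq y).symm⟩
    rw [fourDFCC_mulVec] at hy
    simp only [vecCons_inj, and_true] at hy
    obtain ⟨rfl, rfl, rfl, hat⟩ := hy
    refine ⟨![u + v, u + w, -u], ?_⟩
    rw [fcc_mulVec, mul_add _ _ t, hat, add_zero]
    ring_nf

theorem range_castSucc_eq_ne_last (n : ℕ) :
    Set.range (Fin.castSucc : Fin n → Fin (n + 1)) = {i | i ≠ Fin.last n} := by
  ext i
  rw [Fin.range_castSucc, Set.mem_ofPred_eq, Set.mem_ofPred_eq, ← Fin.lt_last_iff_ne_last,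
    Fin.lt_def, Fin.val_last]

theorem fourD_FCC_symmetric_and_projection_general (a : ℕ) :
    IsLinearlySymmetric
      !![(2 * a : ℤ), a, a, a; 0, a, 0, 0; 0, 0, a, 0; 0, 0, 0, a] ∧
    Nonempty (projGraph
      !![(2 * a : ℤ), a, a, a; 0, a, 0, 0; 0, 0, a, 0; 0, 0, 0, a] (3 : Fin 4) ≃g
      latticeGraph !![(a : ℤ), a, 0; a, 0, a; 0, a, a]) := by
  refine ⟨isLinearlySymmetric_fourDFCC a, ⟨?_⟩⟩
  have iso := latticeGraphIsoSpannedSubgraph (colSpan_fcc_eq_comap a) (Fin.castSucc_injective 3)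
  rw [range_castSucc_eq_ne_last] at iso
  exact iso.symm

/-- `4D-FCC(a)` is linearly symmetric and its projection over `e₄` is
isomorphic to `FCC(a)`. -/
theorem fourD_FCC_symmetric_and_projection (a : ℕ) (ha : 0 < a) :
    IsLinearlySymmetric
      !![(2 * a : ℤ), a, a, a; 0, a, 0, 0; 0, 0, a, 0; 0, 0, 0, a] ∧
    Nonempty (projGraph
      !![(2 * a : ℤ), a, a, a; 0, a, 0, 0; 0, 0, a, 0; 0, 0, 0, a] (3 : Fin 4) ≃g
      latticeGraph !![(a : ℤ), a, 0; a, 0, a; 0, a, a]) :=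
  fourD_FCC_symmetric_and_projection_general a
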